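/- Let tokens move on a path with n vertices under an arbitrary sequence of swap layers (matchings of path edges). Then the token starting at vertex 0 can become adjacent to at most one new token per applied swap layer; consequently no swap strategy on the path achieves full connectivity (every pair of tokens adjacent at some time) in fewer than n−2 swap layers. -/
import Mathlib


/-- A swap layer on a path with `n` vertices, given by the set `A` of left endpoints of
its edges `(a, a+1)`: all edges lie in the path and are pairwise disjoint (a matching). -/
def IsSwapLayer (n : ℕ) (A : Finset ℕ) : Prop :=
  (∀ a ∈ A, a + 1 < n) ∧ ∀ a ∈ A, ∀ b ∈ A, a ≠ b → a + 1 ≠ b ∧ b + 1 ≠ a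

/-- Applying a swap layer (given by the left endpoints `A` of its edges) to a position. -/
def applyLayer (A : Finset ℕ) (j : ℕ) : ℕ :=
  if j ∈ A then j + 1 else if 1 ≤ j ∧ j - 1 ∈ A then j - 1 else j

/-- `layerPos L t i` is the position after the first `t` swap layers of the sequence `L`
of the token that started at vertex `i`. -/
def layerPos (L : ℕ → Finset ℕ) : ℕ → ℕ → ℕ
  | 0, i => i
  | t + 1, i => applyLayer (L t) (layerPos L t i)

lemma applyLayer_bounds (A : Finset ℕ) (j : ℕ) :
    j ≤ applyLayer A j + 1 ∧ applyLayer A j ≤ j + 1 := by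
  unfold applyLayer
  split_ifs <;> omega

lemma applyLayer_applyLayer {n : ℕ} {A : Finset ℕ} (h : IsSwapLayer n A) (j : ℕ) :
    applyLayer A (applyLayer A j) = j := by
  have hsucc : ∀ a ∈ A, a + 1 ∉ A := by
    intro a ha hb
    exact (h.2 a ha (a + 1) hb (by omega)).1 rfl
  unfold applyLayer
  by_cases hj : j ∈ A
  · simp only [hj, if_pos]
    have h1 : j + 1 ∉ A := hsucc j hj
    have h2 : 1 ≤ j + 1 ∧ j + 1 - 1 ∈ A := ⟨by omega, by simpa using hj⟩
    simp [h1, h2, hj]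
  · by_cases hj' : 1 ≤ j ∧ j - 1 ∈ A
    · simp only [hj, if_neg, hj', if_pos, not_false_iff]
      have : j - 1 + 1 = j := by omega
      simp [hj'.2, this]
    · simp [hj, hj']

lemma applyLayer_lt {n : ℕ} {A : Finset ℕ} (h : IsSwapLayer n A) {j : ℕ} (hj : j < n) :
    applyLayer A j < n := by
  unfold applyLayer
  split_ifs with h1 h2
  · exact h.1 j h1
  · omega
  · exact hj

lemma applyLayer_injective {n : ℕ} {A : Finset ℕ} (h : IsSwapLayer n A) :
    Function.Injective (applyLayer A) :=
  Function.LeftInverse.injective (g := applyLayer A) (applyLayer_applyLayer h)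

lemma layerPos_injective {n : ℕ} {L : ℕ → Finset ℕ} (hL : ∀ t, IsSwapLayer n (L t)) (t : ℕ) :
    Function.Injective (layerPos L t) := by
  induction t with
  | zero => intro a b hab; simpa [layerPos] using hab
  | succ t ih =>
    intro a b hab
    exact ih (applyLayer_injective (hL t) hab)

lemma layerPos_lt {n : ℕ} {L : ℕ → Finset ℕ} (hL : ∀ t, IsSwapLayer n (L t)) (t : ℕ)
    {i : ℕ} (hi : i < n) : layerPos L t i < n := by
  induction t with
  | zero => simpa [layerPos]
  | succ t ih => exact applyLayer_lt (hL t) ih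

/-- Crossing lemma: positions move by at most one, so if `y` jumps from right of `x`
to strictly left of (the image of) `x`, then `y = x + 1`. -/
lemma cross {A : Finset ℕ} {x y : ℕ} (hxy : x < y)
    (hf : applyLayer A y < applyLayer A x) : y = x + 1 := by
  have h1 := applyLayer_bounds A x
  have h2 := applyLayer_bounds A y
  omega

/-- Every token strictly to the left of token 0 has been adjacent to it at an earlier time. -/
lemma left_invariant {n : ℕ} {L : ℕ → Finset ℕ} (hL : ∀ t, IsSwapLayer n (L t)) :
    ∀ t j, j ≠ 0 → layerPos L t j < layerPos L t 0 →
      ∃ s < t, layerPos L s 0 + 1 = layerPos L s j ∨ layerPos L s j + 1 = layerPos L s 0 := by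
  intro t
  induction t with
  | zero => intro j hj hlt; simp [layerPos] at hlt
  | succ t ih =>
    intro j hj hlt
    have hne : layerPos L t j ≠ layerPos L t 0 := fun h => hj (layerPos_injective hL t h)
    rcases lt_or_gt_of_ne hne with hq | hq
    · obtain ⟨s, hs, hadj⟩ := ih j hj hq
      exact ⟨s, by omega, hadj⟩
    · have := cross hq hlt
      exact ⟨t, by omega, Or.inl this.symm⟩

/-- under an arbitrary sequence of swap layers on a path with `n` vertices,
(a) the token starting at vertex `0` becomes adjacent to at most one new token per applied
swap layer, and (b) consequently no swap strategy achieves full connectivity (every pair of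
distinct tokens adjacent at some time `t ≤ T`) in fewer than `n - 2` swap layers. -/
theorem line_lower_bound (n : ℕ) (hn : 2 ≤ n) (L : ℕ → Finset ℕ)
    (hL : ∀ t, IsSwapLayer n (L t)) :
    (∀ T : ℕ,
      Set.ncard {j | j < n ∧ j ≠ 0 ∧ ∃ t ≤ T + 1,
          layerPos L t 0 + 1 = layerPos L t j ∨ layerPos L t j + 1 = layerPos L t 0} ≤
      Set.ncard {j | j < n ∧ j ≠ 0 ∧ ∃ t ≤ T,
          layerPos L t 0 + 1 = layerPos L t j ∨ layerPos L t j + 1 = layerPos L t 0} + 1) ∧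
    (∀ T : ℕ,
      (∀ i < n, ∀ j < n, i ≠ j →
        ∃ t ≤ T, layerPos L t i + 1 = layerPos L t j ∨ layerPos L t j + 1 = layerPos L t i) →
      n - 2 ≤ T) := by
  set S : ℕ → Set ℕ := fun T => {j | j < n ∧ j ≠ 0 ∧ ∃ t ≤ T,
      layerPos L t 0 + 1 = layerPos L t j ∨ layerPos L t j + 1 = layerPos L t 0} with hS
  have hfin : ∀ T, (S T).Finite := fun T =>
    (Set.finite_Iio n).subset (fun j hj => hj.1)
  have parta : ∀ T : ℕ, (S (T + 1)).ncard ≤ (S T).ncard + 1 := by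
    intro T
    set E : Set ℕ := {j | layerPos L (T + 1) j = layerPos L (T + 1) 0 + 1} with hE
    have hsub : S (T + 1) ⊆ S T ∪ E := by
      rintro j ⟨hjn, hj0, t, ht, hadj⟩
      rcases Nat.lt_or_ge t (T + 1) with ht' | ht'
      · exact Or.inl ⟨hjn, hj0, t, by omega, hadj⟩
      · have ht1 : t = T + 1 := by omega
        subst ht1
        rcases hadj with h | h
        · exact Or.inr h.symm
        · obtain ⟨s, hs, hadj'⟩ :=
            left_invariant hL (T + 1) j hj0 (by omega)
          exact Or.inl ⟨hjn, hj0, s, by omega, hadj'⟩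
    have hEsub : E.Subsingleton := by
      intro a ha b hb
      exact layerPos_injective hL (T + 1) (ha.trans hb.symm)
    have hEcard : E.ncard ≤ 1 := by
      rcases hEsub.eq_empty_or_singleton with h | ⟨a, h⟩
      · simp [h]
      · simp [h]
    calc (S (T + 1)).ncard ≤ (S T ∪ E).ncard :=
          Set.ncard_le_ncard hsub (((hfin T).union (hEsub.finite)))
      _ ≤ (S T).ncard + E.ncard := Set.ncard_union_le _ _
      _ ≤ (S T).ncard + 1 := by omega
  refine ⟨parta, ?_⟩
  intro T hconn
  have hind : ∀ T, (S T).ncard ≤ T + 1 := by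
    intro T
    induction T with
    | zero =>
      have hsub : S 0 ⊆ {1} := by
        rintro j ⟨hjn, hj0, t, ht, hadj⟩
        interval_cases t
        simp only [layerPos] at hadj
        simp
        omega
      calc (S 0).ncard ≤ ({1} : Set ℕ).ncard :=
            Set.ncard_le_ncard hsub (Set.finite_singleton 1)
        _ = 1 := Set.ncard_singleton 1
    | succ T ih => exact le_trans (parta T) (by omega)
  have hall : {j | j < n ∧ j ≠ 0} ⊆ S T := by
    rintro j ⟨hjn, hj0⟩
    obtain ⟨t, ht, hadj⟩ := hconn 0 (by omega) j hjn (Ne.symm hj0)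
    exact ⟨hjn, hj0, t, ht, hadj⟩
  have heq : {j | j < n ∧ j ≠ 0} = ↑(Finset.Ico 1 n) := by
    ext j; simp; omega
  have hcard : ({j | j < n ∧ j ≠ 0} : Set ℕ).ncard = n - 1 := by
    rw [heq, Set.ncard_coe_finset, Nat.card_Ico]
  have hle : n - 1 ≤ (S T).ncard := by
    rw [← hcard]
    exact Set.ncard_le_ncard hall (hfin T)
  have := hind T
  omega
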